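/- Let q > 1 be a real number and x > 0. Define the sequence (a_i) of nonnegative integers recursively: if a_k has been defined for all k < n, let a_n be the largest nonnegative integer satisfying a_1/q + ... + a_n/q^n < x. Then (a_i) has infinitely many nonzero terms, Σ_{i≥1} a_i q^{−i} = x, and furthermore a_n < q for all n ≥ 2. -/

import Mathlib

/-!
Writing `sₙ` for the partial sums, each digit is chosen so that
`sₙ₊₁ < x ≤ sₙ₊₁ + q^{-(n+1)}`: the partial sums stay strictly below `x` and converge to it.
Strictness forbids the expansion from terminating, since a finite expansion would equal one of
its partial sums. Combining `sₙ₊₁ + aₙ₊₁ q^{-(n+2)} < x ≤ sₙ₊₁ + q^{-(n+1)}` gives `aₙ₊₁ < q`.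
-/

open Filter Topology

noncomputable def qgDigitU (q x s : ℝ) (n : ℕ) : ℕ :=
  sSup {m : ℕ | s + (m : ℝ) / q ^ (n + 1) < x}

noncomputable def qgSumU (q x : ℝ) : ℕ → ℝ
  | 0 => 0
  | n + 1 => qgSumU q x n + (qgDigitU q x (qgSumU q x n) n : ℝ) / q ^ (n + 1)

/-- `quasiGreedyU q x n` is the digit `a_{n+1}` of the paper: digits are indexed from 0. -/
noncomputable def quasiGreedyU (q x : ℝ) (n : ℕ) : ℕ :=
  qgDigitU q x (qgSumU q x n) n

variable {q x : ℝ}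

theorem qgDigitU_spec (hq : 0 < q) {s : ℝ} (n : ℕ) (hs : s < x) :
    s + (qgDigitU q x s n : ℝ) / q ^ (n + 1) < x ∧
      x ≤ s + ((qgDigitU q x s n : ℝ) + 1) / q ^ (n + 1) := by
  have hpow : 0 < q ^ (n + 1) := pow_pos hq _
  set S := {m : ℕ | s + (m : ℝ) / q ^ (n + 1) < x}
  have hbdd : BddAbove S := by
    refine ⟨⌈(x - s) * q ^ (n + 1)⌉₊, fun m hm => ?_⟩
    have hm : (m : ℝ) / q ^ (n + 1) < x - s := by rw [lt_sub_iff_add_lt']; exact hm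
    exact (Nat.lt_ceil.mpr ((div_lt_iff₀ hpow).mp hm)).le
  have hmem : qgDigitU q x s n ∈ S := Nat.sSup_mem ⟨0, by simpa [S] using hs⟩ hbdd
  refine ⟨hmem, not_lt.mp fun h => ?_⟩
  have hsucc : qgDigitU q x s n + 1 ∈ S := by simpa [S] using h
  exact (le_csSup hbdd hsucc).not_gt (Nat.lt_succ_self _)

theorem qgSumU_succ (n : ℕ) :
    qgSumU q x (n + 1) = qgSumU q x n + (quasiGreedyU q x n : ℝ) / q ^ (n + 1) :=
  rfl

theorem qgSumU_eq_sum_range (n : ℕ) :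
    qgSumU q x n = ∑ i ∈ Finset.range n, (quasiGreedyU q x i : ℝ) / q ^ (i + 1) := by
  induction n with
  | zero => rfl
  | succ n ih => rw [Finset.sum_range_succ, ← ih, qgSumU_succ]

theorem qgSumU_lt (hq : 0 < q) (hx : 0 < x) (n : ℕ) : qgSumU q x n < x := by
  induction n with
  | zero => exact hx
  | succ n ih => exact (qgDigitU_spec hq n ih).1

theorem le_qgSumU_add (hq : 0 < q) (hx : 0 < x) (n : ℕ) :
    x ≤ qgSumU q x (n + 1) + 1 / q ^ (n + 1) := by
  have h := (qgDigitU_spec hq n (qgSumU_lt hq hx n)).2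
  rw [add_div] at h
  rw [qgSumU_succ]
  unfold quasiGreedyU
  linarith

theorem tendsto_qgSumU (hq : 1 < q) (hx : 0 < x) : Tendsto (qgSumU q x) atTop (𝓝 x) := by
  have hq0 : 0 < q := one_pos.trans hq
  have hgap : Tendsto (fun n : ℕ => 1 / q ^ (n + 1)) atTop (𝓝 0) := by
    simpa only [one_div, inv_pow, Function.comp_def] using
      (tendsto_pow_atTop_nhds_zero_of_lt_one (inv_nonneg.mpr hq0.le) (inv_lt_one_of_one_lt₀ hq)).comp
        (tendsto_add_atTop_nat 1)
  refine (tendsto_add_atTop_iff_nat 1).mp <|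
    tendsto_of_tendsto_of_tendsto_of_le_of_le (by simpa only [sub_zero] using tendsto_const_nhds.sub hgap)
      tendsto_const_nhds (fun n => ?_) (fun n => (qgSumU_lt hq0 hx (n + 1)).le)
  linarith [le_qgSumU_add hq0 hx n]

theorem hasSum_quasiGreedyU (hq : 1 < q) (hx : 0 < x) :
    HasSum (fun i => (quasiGreedyU q x i : ℝ) / q ^ (i + 1)) x := by
  refine (hasSum_iff_tendsto_nat_of_nonneg (fun i => by positivity) x).mpr ?_
  simpa only [← qgSumU_eq_sum_range] using tendsto_qgSumU hq hx

theorem quasiGreedyU_succ_lt (hq : 0 < q) (hx : 0 < x) (n : ℕ) :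
    (quasiGreedyU q x (n + 1) : ℝ) < q := by
  have hupper := le_qgSumU_add hq hx n
  have hdigit := (qgDigitU_spec hq (n + 1) (qgSumU_lt hq hx (n + 1))).1
  have hlt : (quasiGreedyU q x (n + 1) : ℝ) / q ^ (n + 2) < 1 / q ^ (n + 1) := by
    unfold quasiGreedyU
    linarith
  rwa [div_lt_iff₀ (pow_pos hq _), pow_succ _ (n + 1), ← mul_assoc,
    one_div_mul_cancel (pow_ne_zero _ hq.ne'), one_mul] at hlt

theorem setOf_quasiGreedyU_ne_zero_infinite (hq : 1 < q) (hx : 0 < x) :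
    {n | quasiGreedyU q x n ≠ 0}.Infinite := by
  intro hfin
  obtain ⟨N, hN⟩ := hfin.bddAbove
  have hsum : ∑' i, (quasiGreedyU q x i : ℝ) / q ^ (i + 1) = qgSumU q x (N + 1) := by
    rw [qgSumU_eq_sum_range]
    refine tsum_eq_sum fun i hi => ?_
    have hzero : quasiGreedyU q x i = 0 := by
      by_contra h
      exact hi (Finset.mem_range.mpr (Nat.lt_succ_of_le (hN h)))
    simp [hzero]
  exact (qgSumU_lt (one_pos.trans hq) hx (N + 1)).ne <|
    hsum.symm.trans (hasSum_quasiGreedyU hq hx).tsum_eq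

/-- Proposition 2.4: for `q > 1` and `x > 0`, the quasi-greedy sequence with unbounded
digits is an infinite expansion of `x`, and moreover `a_n < q` for all `n ≥ 2`. -/
theorem quasiGreedyU_infinite_expansion (q x : ℝ) (hq : 1 < q) (hx : 0 < x) :
    {n | quasiGreedyU q x n ≠ 0}.Infinite ∧
    (∑' i, (quasiGreedyU q x i : ℝ) / q ^ (i + 1) = x) ∧
    ∀ n, 1 ≤ n → (quasiGreedyU q x n : ℝ) < q := by
  refine ⟨setOf_quasiGreedyU_ne_zero_infinite hq hx, (hasSum_quasiGreedyU hq hx).tsum_eq, ?_⟩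
  rintro (_ | n) hn
  · omega
  · exact quasiGreedyU_succ_lt (one_pos.trans hq) hx n
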